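/- Let S be a regular local ring, f a nonzero nonunit of S, and d ≥ 3. If (φ₁, …, φ_{d-1}) is an indecomposable matrix factorization of f with d−1 factors, then the d-fold matrix factorization (φ₁, …, φ_{d-1}, 1_{F₁}) obtained by appending the identity map is indecomposable in the category of d-fold matrix factorizations of f. -/

import Mathlib

open IsLocalRing

/-- A Noetherian local ring is regular if its maximal ideal can be generated by
`dim` many elements. -/
def IsRegularLocal (S : Type*) [CommRing S] [IsLocalRing S] : Prop :=
  IsNoetherianRing S ∧ ∃ s : Finset S, Ideal.span (s : Set S) = maximalIdeal S ∧
    (s.card : WithBot (WithTop ℕ)) = ringKrullDim S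

/-- A `d`-fold matrix factorization of `f`. -/
def IsMatrixFactorization {S : Type*} [CommRing S] (f : S) {d n : ℕ}
    (φ : Fin d → Matrix (Fin n) (Fin n) S) : Prop :=
  (List.ofFn φ).prod = f • (1 : Matrix (Fin n) (Fin n) S)

/-- An endomorphism of a `d`-fold matrix factorization: a tuple of matrices
`e i : F_i → F_i` with `e i * φ i = φ i * e (i+1)` (indices mod `d`). -/
def MFEndo {S : Type*} [CommRing S] {d n : ℕ} [NeZero d]
    (φ e : Fin d → Matrix (Fin n) (Fin n) S) : Prop :=
  ∀ i, e i * φ i = φ i * e (i + 1)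

/-- A matrix factorization is indecomposable if its only idempotent endomorphisms
are `0` and `1`. -/
def MFIndecomposable {S : Type*} [CommRing S] (f : S) {d n : ℕ} [NeZero d]
    (φ : Fin d → Matrix (Fin n) (Fin n) S) : Prop :=
  IsMatrixFactorization f φ ∧
    ∀ e : Fin d → Matrix (Fin n) (Fin n) S, MFEndo φ e → (∀ i, e i * e i = e i) →
      e = 0 ∨ e = 1

/-!
The last structure map of the extended factorization is the identity, so the last commutation
square of an endomorphism `e` forces `e_d = e_1`. Hence the remaining squares say exactly that
`(e_1, …, e_{d-1})` is an endomorphism of the original factorization, idempotent if `e` is; by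
indecomposability it is `0` or `1`, and then so is `e`.
-/

namespace Fin

variable {α : Type*} {m : ℕ}

theorem apply_succ_eq_init_add_one [NeZero m] {q : Fin (m + 1) → α}
    (hq : q (last m) = q 0) (i : Fin m) : q i.succ = init q (i + 1) := by
  obtain ⟨k, rfl⟩ := Nat.exists_eq_succ_of_ne_zero (NeZero.ne m)
  induction i using lastCases with
  | last => simp [init, last_add_one, hq]
  | cast j => simp [init, coeSucc_eq_succ]

theorem eq_const_of_init_eq_const [NeZero m] {q : Fin (m + 1) → α}
    (hq : q (last m) = q 0) {a : α} (h : init q = fun _ => a) : q = fun _ => a := by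
  funext j
  induction j using lastCases with
  | last => rw [hq, ← castSucc_zero]; exact congrFun h 0
  | cast i => exact congrFun h i

end Fin

section

variable {S : Type*} [CommRing S] {m n : ℕ} {φ : Fin m → Matrix (Fin n) (Fin n) S}

theorem IsMatrixFactorization.snoc_one {f : S} (h : IsMatrixFactorization f φ) :
    IsMatrixFactorization f (Fin.snoc φ 1) := by
  rw [IsMatrixFactorization] at h
  rw [IsMatrixFactorization, List.ofFn_succ']
  simpa using h

namespace MFEndo

variable {e : Fin (m + 1) → Matrix (Fin n) (Fin n) S}

theorem apply_last_eq_apply_zero (he : MFEndo (Fin.snoc φ 1) e) : e (Fin.last m) = e 0 := by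
  simpa [Fin.last_add_one] using he (Fin.last m)

theorem init_of_snoc_one [NeZero m] (he : MFEndo (Fin.snoc φ 1) e) : MFEndo φ (Fin.init e) := by
  intro i
  have h := he i.castSucc
  rwa [Fin.snoc_castSucc, Fin.coeSucc_eq_succ,
    Fin.apply_succ_eq_init_add_one he.apply_last_eq_apply_zero] at h

end MFEndo

end

theorem append_identity_indecomposable_general {S : Type*} [CommRing S]
    (f : S)
    (m n : ℕ) [NeZero m]
    (φ : Fin m → Matrix (Fin n) (Fin n) S)
    (hindec : MFIndecomposable f φ) :
    MFIndecomposable f (Fin.snoc φ (1 : Matrix (Fin n) (Fin n) S)) := by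
  refine ⟨hindec.1.snoc_one, fun e he hidem => ?_⟩
  have hlast := he.apply_last_eq_apply_zero
  rcases hindec.2 (Fin.init e) he.init_of_snoc_one (fun i => hidem i.castSucc) with h | h
  · exact Or.inl (Fin.eq_const_of_init_eq_const hlast h)
  · exact Or.inr (Fin.eq_const_of_init_eq_const hlast h)

/-- over a regular local ring, appending the identity map to an
indecomposable `(d-1)`-fold matrix factorization of a nonzero nonunit `f`
(here `d = m + 1 ≥ 3`) yields an indecomposable `d`-fold matrix factorization. -/
theorem append_identity_indecomposable {S : Type*} [CommRing S] [IsLocalRing S]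
    (hreg : IsRegularLocal S) (f : S) (hf0 : f ≠ 0) (hfu : ¬ IsUnit f)
    (m n : ℕ) (hm : 2 ≤ m) [NeZero m]
    (φ : Fin m → Matrix (Fin n) (Fin n) S)
    (hindec : MFIndecomposable f φ) :
    MFIndecomposable f (Fin.snoc φ (1 : Matrix (Fin n) (Fin n) S)) :=
  append_identity_indecomposable_general f m n φ hindec
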